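/- arXiv:2605.27617 — 6 statements merged into one kernel-verified Lean document; each statement's English description precedes it below -/
import Mathlib

section
/- For every n ≥ 2, the word w = (x_0 x_1 ⋯ x_{n-1}) · (x_0⁻¹ x_1⁻¹ ⋯ x_{n-1}⁻¹) (all generators in order, followed by all their inverses in the same order) is a solution to the (n−1)-out-of-n picture-hanging puzzle and has length 2n; moreover, every solution w' to the (n−1)-out-of-n puzzle satisfies |w'| ≥ 2n. Hence the minimum length of a solution to the (n−1)-out-of-n puzzle is exactly 2n. -/
/-- The removal homomorphism: kills the generators with index in `S`. -/
def kill {n : ℕ} (S : Finset (Fin n)) : FreeGroup (Fin n) →* FreeGroup (Fin n) :=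
  FreeGroup.lift fun i => if i ∈ S then 1 else FreeGroup.of i

/-- `w` is a solution to the `k`-out-of-`n` picture-hanging puzzle (Demaine convention). -/
def IsSolution {n : ℕ} (k : ℕ) (w : FreeGroup (Fin n)) : Prop :=
  ∀ S : Finset (Fin n),
    (k ≤ S.card → kill S w = 1) ∧ (S.card < k → kill S w ≠ 1)

/-!
For a duplicate-free list `l = [a₁, …, aₘ]` let `W(l) = a₁ ⋯ aₘ a₁⁻¹ ⋯ aₘ⁻¹` (`hangingWord l`).
Killing a set `S` of generators turns `W(l)` into `W(l \ S)`; the word `W(l)` is reduced unless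
`m = 1`, and `W([a]) = a a⁻¹ = 1`. Hence `kill S W(x₀, …, xₙ₋₁)` is trivial exactly when at most
one generator survives, i.e. when `|S| ≥ n - 1`, and `|W| = 2n`.

Conversely, every generator `xᵢ` occurs at least twice in the reduced word of a solution `w`.
Keeping only `xᵢ` must give the identity, so `xᵢ` does not occur exactly once; and if it did not
occur at all, keeping `xᵢ` and some `xⱼ` would give the same element as keeping `xⱼ` alone, which
is trivial, although only `n - 2` generators were killed. Summing over the generators gives
`|w| ≥ 2n`.
-/

open FreeGroup (mk of IsReduced)

theorem List.sum_countP_fst_eq_length {α β : Type*} [Fintype α] [DecidableEq α]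
    (L : List (α × β)) : ∑ i, L.countP (fun x => x.1 = i) = L.length := by
  induction L with
  | nil => simp
  | cons x L ih => simp [List.countP_cons, Finset.sum_add_distrib, ih, add_comm]

namespace FreeGroup

variable {α : Type*}

theorem mk_eq_prod_map (L : List (α × Bool)) :
    mk L = (L.map fun x => cond x.2 (of x.1) (of x.1)⁻¹).prod := by
  rw [← lift_mk, lift_of_apply]

theorem mk_ne_one_of_length_eq_one [DecidableEq α] {L : List (α × Bool)} (h : L.length = 1) :
    mk L ≠ 1 := by
  obtain ⟨p, rfl⟩ := List.length_eq_one_iff.mp h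
  rw [← toWord_injective.ne_iff, toWord_mk, reduce_singleton, toWord_one]
  exact List.cons_ne_nil p []

end FreeGroup

section HangingWord

variable {α : Type*}

def hangingWord (l : List α) : List (α × Bool) :=
  l.map (·, true) ++ l.map (·, false)

theorem mk_hangingWord (l : List α) :
    mk (hangingWord l) = (l.map of).prod * (l.map fun i => (of i)⁻¹).prod := by
  simp [FreeGroup.mk_eq_prod_map, hangingWord, Function.comp_def]

theorem filter_hangingWord (p : α → Bool) (l : List α) :
    (hangingWord l).filter (fun x => p x.1) = hangingWord (l.filter p) := by
  simp [hangingWord, List.filter_map, Function.comp_def]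

theorem isReduced_hangingWord {l : List α} (hl : l.Nodup) (h1 : l.length ≠ 1) :
    IsReduced (hangingWord l) := by
  have same_sign (b : Bool) : IsReduced (l.map (·, b)) :=
    (List.isChain_map _).mpr (List.Pairwise.isChain (List.pairwise_of_forall fun _ _ _ => rfl))
  match l, hl, h1 with
  | [], _, _ => exact IsReduced.nil
  | [_], _, h1 => exact absurd rfl h1
  | a :: b :: t, hl, _ =>
    refine List.IsChain.append (same_sign true) (same_sign false) ?_
    intro x hx y hy
    rw [List.getLast?_map, List.getLast?_cons_cons] at hx
    obtain ⟨c, hc, rfl⟩ := Option.mem_map.mp hx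
    obtain rfl : (a, false) = y := by simpa using hy
    rintro (rfl : c = a)
    exact absurd (List.mem_of_mem_getLast? hc) (List.nodup_cons.mp hl).1

theorem norm_mk_hangingWord [DecidableEq α] {l : List α} (hl : l.Nodup) (h1 : l.length ≠ 1) :
    FreeGroup.norm (mk (hangingWord l)) = 2 * l.length := by
  rw [FreeGroup.norm, FreeGroup.toWord_mk, (isReduced_hangingWord hl h1).reduce_eq, hangingWord,
    List.length_append, List.length_map, List.length_map, two_mul]

theorem mk_hangingWord_eq_one_iff [DecidableEq α] {l : List α} (hl : l.Nodup) :
    mk (hangingWord l) = 1 ↔ l.length ≤ 1 := by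
  match l, hl with
  | [], _ => simp [hangingWord, ← FreeGroup.one_eq_mk]
  | [a], _ => simp [hangingWord, FreeGroup.mk_eq_prod_map]
  | a :: b :: t, hl =>
    rw [← FreeGroup.norm_eq_zero, norm_mk_hangingWord hl (by simp)]
    simp

end HangingWord

section Kill

variable {n : ℕ}

theorem kill_mk (S : Finset (Fin n)) (L : List (Fin n × Bool)) :
    kill S (mk L) = mk (L.filter fun x => x.1 ∉ S) := by
  induction L with
  | nil => rfl
  | cons x L ih =>
    rw [← List.singleton_append, ← FreeGroup.mul_mk, map_mul, ih, List.filter_append]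
    obtain ⟨i, _ | _⟩ := x <;> by_cases hi : i ∈ S <;>
      simp [hi, kill, FreeGroup.mk_eq_prod_map]

theorem kill_compl_mk (T : Finset (Fin n)) (L : List (Fin n × Bool)) :
    kill Tᶜ (mk L) = mk (L.filter fun x => x.1 ∈ T) := by
  simp [kill_mk]

theorem length_filter_finRange_notMem (S : Finset (Fin n)) :
    ((List.finRange n).filter fun i => i ∉ S).length = n - S.card := by
  rw [← List.toFinset_card_of_nodup ((List.nodup_finRange n).filter _)]
  have : ((List.finRange n).filter fun i => i ∉ S).toFinset = Sᶜ := by ext; simp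
  rw [this, Finset.card_compl, Fintype.card_fin]

end Kill

theorem isSolution_mk_hangingWord_finRange (n : ℕ) :
    IsSolution (n - 1) (mk (hangingWord (List.finRange n))) := by
  intro S
  have hS : S.card ≤ n := by simpa using S.card_le_univ
  have h_one_iff : kill S (mk (hangingWord (List.finRange n))) = 1 ↔ n - 1 ≤ S.card := by
    rw [kill_mk, filter_hangingWord (fun i => i ∉ S),
      mk_hangingWord_eq_one_iff ((List.nodup_finRange n).filter _), length_filter_finRange_notMem]
    omega
  exact ⟨h_one_iff.mpr, fun h => mt h_one_iff.mp (by omega)⟩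

namespace IsSolution

variable {n : ℕ} {w : FreeGroup (Fin n)}

theorem mk_filter_fst_eq_one (hw : IsSolution (n - 1) w) (i : Fin n) :
    mk (w.toWord.filter fun x => x.1 = i) = 1 := by
  have h := (hw {i}ᶜ).1 (by simp [Finset.card_compl])
  rw [← FreeGroup.mk_toWord (x := w), kill_compl_mk] at h
  simpa only [Finset.mem_singleton] using h

theorem two_le_countP (hn : 2 ≤ n) (hw : IsSolution (n - 1) w) (i : Fin n) :
    2 ≤ w.toWord.countP fun x => x.1 = i := by
  have h_ne_one : w.toWord.countP (fun x => x.1 = i) ≠ 1 := fun h =>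
    FreeGroup.mk_ne_one_of_length_eq_one (List.countP_eq_length_filter ▸ h)
      (hw.mk_filter_fst_eq_one i)
  have h_ne_zero : w.toWord.countP (fun x => x.1 = i) ≠ 0 := by
    intro h0
    have : Nontrivial (Fin n) := Fin.nontrivial_iff_two_le.mpr hn
    obtain ⟨j, hji⟩ := exists_ne i
    refine (hw {i, j}ᶜ).2 ?_ ?_
    · rw [Finset.card_compl, Finset.card_pair hji.symm, Fintype.card_fin]
      omega
    · rw [← FreeGroup.mk_toWord (x := w), kill_compl_mk]
      convert hw.mk_filter_fst_eq_one j using 2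
      refine List.filter_congr fun x hx => ?_
      have : x.1 ≠ i := by simpa using List.countP_eq_zero.mp h0 x hx
      simp [this]
  omega

theorem two_mul_le_norm (hn : 2 ≤ n) (hw : IsSolution (n - 1) w) : 2 * n ≤ FreeGroup.norm w :=
  calc 2 * n = ∑ _i : Fin n, 2 := by simp [mul_comm]
    _ ≤ ∑ i, w.toWord.countP fun x => x.1 = i :=
      Finset.sum_le_sum fun i _ => hw.two_le_countP hn i
    _ = FreeGroup.norm w := List.sum_countP_fst_eq_length _

end IsSolution

theorem n_minus_one_out_of_n_min_length (n : ℕ) (hn : 2 ≤ n) :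
    IsSolution (n - 1)
      (((List.finRange n).map FreeGroup.of).prod *
        ((List.finRange n).map (fun i => (FreeGroup.of i)⁻¹)).prod) ∧
    FreeGroup.norm
      (((List.finRange n).map FreeGroup.of).prod *
        ((List.finRange n).map (fun i => (FreeGroup.of i)⁻¹)).prod) = 2 * n ∧
    ∀ w : FreeGroup (Fin n), IsSolution (n - 1) w → 2 * n ≤ FreeGroup.norm w := by
  rw [← mk_hangingWord]
  refine ⟨isSolution_mk_hangingWord_finRange n, ?_, fun w hw => hw.two_mul_le_norm hn⟩
  rw [norm_mk_hangingWord (List.nodup_finRange n) (by rw [List.length_finRange]; omega),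
    List.length_finRange]
end

section
/- For every i ≥ 0 and n = 2^i, there exists a solution w to the 1-out-of-n picture-hanging puzzle with |w| = n² = 4^i, namely the balanced commutator tree defined recursively: on a single generator the word is that generator, and on 2m generators it is the commutator ⁅A, B⁆ = A·B·A⁻¹·B⁻¹ where A is the balanced commutator tree word on the first m generators and B is the balanced commutator tree word on the last m generators. -/
open scoped commutatorElement

/-- The balanced commutator tree word on the `2^i` generators `lo, lo+1, …, lo+2^i-1`
(as a word in the free group on ℕ-indexed generators):
a single generator at depth `0`, and at depth `i+1` the commutator of the balanced
commutator tree words on the first and last `2^i` generators. -/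
def balancedCommTree : ℕ → ℕ → FreeGroup ℕ
  | lo, 0 => FreeGroup.of lo
  | lo, i + 1 => ⁅balancedCommTree lo i, balancedCommTree (lo + 2 ^ i) i⁆

/-- Reindex a word on ℕ-indexed generators as a word in `FreeGroup (Fin n)`
(generators with index `≥ n` are sent to `1`; `balancedCommTree 0 i` only uses
indices `< 2^i`). -/
def toFin (n : ℕ) : FreeGroup ℕ →* FreeGroup (Fin n) :=
  FreeGroup.lift fun m => if h : m < n then FreeGroup.of ⟨m, h⟩ else 1

open FreeGroup

namespace FreeGroup

variable {α : Type*}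

theorem mem_invRev {L : List (α × Bool)} {x : α × Bool} :
    x ∈ invRev L ↔ (x.1, !x.2) ∈ L := by
  obtain ⟨a, b⟩ := x
  simp [invRev]

theorem IsReduced.append_of_disjoint {L₁ L₂ : List (α × Bool)} (h₁ : IsReduced L₁)
    (h₂ : IsReduced L₂) (h : ∀ x ∈ L₁, ∀ y ∈ L₂, x.1 ≠ y.1) : IsReduced (L₁ ++ L₂) :=
  List.IsChain.append h₁ h₂ fun x hx y hy hxy =>
    (h x (List.mem_of_mem_getLast? hx) y (List.mem_of_mem_head? hy) hxy).elim

/-- Only adjacent factors of `a * b * a⁻¹ * b⁻¹` can cancel, and each adjacent pair involves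
one of `a`, `a⁻¹` and one of `b`, `b⁻¹`. -/
theorem toWord_commutatorElement_of_disjoint [DecidableEq α] {a b : FreeGroup α}
    (ha : a ≠ 1) (hb : b ≠ 1) (hab : ∀ x ∈ a.toWord, ∀ y ∈ b.toWord, x.1 ≠ y.1) :
    ⁅a, b⁆.toWord = a.toWord ++ b.toWord ++ a⁻¹.toWord ++ b⁻¹.toWord := by
  have hba : ∀ x ∈ b.toWord, ∀ y ∈ a⁻¹.toWord, x.1 ≠ y.1 := fun x hx y hy => by
    rw [toWord_inv, mem_invRev] at hy
    exact (hab _ hy x hx).symm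
  have hab' : ∀ x ∈ a⁻¹.toWord, ∀ y ∈ b⁻¹.toWord, x.1 ≠ y.1 := fun x hx y hy => by
    rw [toWord_inv, mem_invRev] at hx hy
    exact hab (x.1, !x.2) hx (y.1, !y.2) hy
  have hred : IsReduced (a.toWord ++ b.toWord ++ a⁻¹.toWord ++ b⁻¹.toWord) := by
    refine .append_overlap (.append_overlap ?_ ?_ ?_) ?_ ?_
    · exact isReduced_toWord.append_of_disjoint isReduced_toWord hab
    · exact isReduced_toWord.append_of_disjoint isReduced_toWord hba
    · exact toWord_eq_nil_iff.not.2 hb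
    · exact isReduced_toWord.append_of_disjoint isReduced_toWord hab'
    · exact toWord_eq_nil_iff.not.2 (inv_ne_one.2 ha)
  have hmk : mk (a.toWord ++ b.toWord ++ a⁻¹.toWord ++ b⁻¹.toWord) = ⁅a, b⁆ := by
    simp only [← mul_mk, mk_toWord, commutatorElement_def]
  rw [← hmk, toWord_mk, hred.reduce_eq]

end FreeGroup

theorem kill_empty {n : ℕ} : kill (∅ : Finset (Fin n)) = MonoidHom.id _ := by
  ext i
  simp [kill]

theorem kill_of_mem {n : ℕ} {S : Finset (Fin n)} {j : Fin n} (hj : j ∈ S) :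
    kill S (of j) = 1 := by
  simp [kill, hj]

theorem isSolution_one_iff {n : ℕ} {w : FreeGroup (Fin n)} :
    IsSolution 1 w ↔ w ≠ 1 ∧ ∀ S : Finset (Fin n), S.Nonempty → kill S w = 1 := by
  refine ⟨fun h => ⟨?_, fun S hS => (h S).1 (Finset.one_le_card.2 hS)⟩, fun ⟨hw, h⟩ S => ?_⟩
  · simpa [kill_empty] using (h ∅).2 (by simp)
  · refine ⟨fun hS => h S (Finset.one_le_card.1 hS), fun hS => ?_⟩
    rw [Finset.card_eq_zero.1 (Nat.lt_one_iff.1 hS), kill_empty]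
    exact hw

theorem toFin_of {n m : ℕ} (h : m < n) : toFin n (of m) = of ⟨m, h⟩ := by
  simp [toFin, h]

theorem map_balancedCommTree_eq_one {G : Type*} [Group G] (φ : FreeGroup ℕ →* G) {j : ℕ}
    (hj : φ (of j) = 1) {lo i : ℕ} (h₁ : lo ≤ j) (h₂ : j < lo + 2 ^ i) :
    φ (balancedCommTree lo i) = 1 := by
  induction i generalizing lo with
  | zero =>
    obtain rfl : j = lo := by omega
    exact hj
  | succ i ih =>
    rw [balancedCommTree, map_commutatorElement]
    by_cases hleft : j < lo + 2 ^ i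
    · rw [ih h₁ hleft, commutatorElement_one_left]
    · rw [ih (lo := lo + 2 ^ i) (by omega) (by rw [pow_succ] at h₂; omega),
        commutatorElement_one_right]

theorem toWord_toFin_balancedCommTree {n lo i : ℕ} (h : lo + 2 ^ i ≤ n) :
    (toFin n (balancedCommTree lo i)).toWord.length = 4 ^ i ∧
      ∀ x ∈ (toFin n (balancedCommTree lo i)).toWord,
        lo ≤ (x.1 : ℕ) ∧ (x.1 : ℕ) < lo + 2 ^ i := by
  induction i generalizing lo with
  | zero =>
    rw [balancedCommTree, toFin_of (by omega), toWord_of]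
    simp
  | succ i ih =>
    rw [pow_succ] at h ⊢
    obtain ⟨hlenA, hA⟩ := ih (lo := lo) (by omega)
    obtain ⟨hlenB, hB⟩ := ih (lo := lo + 2 ^ i) (by omega)
    have hne : ∀ {x : FreeGroup (Fin n)}, x.toWord.length = 4 ^ i → x ≠ 1 := fun hx h1 => by
      simp only [h1, toWord_one, List.length_nil] at hx
      exact (pow_pos four_pos i).ne hx
    rw [balancedCommTree, map_commutatorElement, toWord_commutatorElement_of_disjoint
      (hne hlenA) (hne hlenB) fun x hx y hy => by have := hA x hx; have := hB y hy; omega]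
    refine ⟨by simp [toWord_inv, hlenA, hlenB]; ring, fun x hx => ?_⟩
    simp only [List.mem_append, toWord_inv, mem_invRev] at hx
    rcases hx with ((hx | hx) | hx) | hx
    · have := hA _ hx; omega
    · have := hB _ hx; omega
    · have := hA _ hx; dsimp only at this; omega
    · have := hB _ hx; dsimp only at this; omega

theorem one_out_of_n_balanced_tree (i : ℕ) :
    IsSolution 1 (toFin (2 ^ i) (balancedCommTree 0 i)) ∧
    FreeGroup.norm (toFin (2 ^ i) (balancedCommTree 0 i)) = 4 ^ i := by
  have hnorm : norm (toFin (2 ^ i) (balancedCommTree 0 i)) = 4 ^ i :=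
    (toWord_toFin_balancedCommTree (lo := 0) (Nat.zero_add _).le).1
  refine ⟨isSolution_one_iff.2 ⟨fun h1 => ?_, fun S ⟨j, hj⟩ => ?_⟩, hnorm⟩
  · rw [h1, FreeGroup.norm_one] at hnorm
    exact (pow_pos four_pos i).ne hnorm
  · exact map_balancedCommTree_eq_one ((kill S).comp (toFin _)) (j := j)
      (by simp [toFin_of j.isLt, kill_of_mem hj]) (Nat.zero_le _) (by simp)
end

section
/- Staircase separation: fix naturals n₁, n₂, k with k ≥ 1, and call an index j : ℕ feasible if j ≤ k, j ≤ n₁, and k − j ≤ n₂ (equivalently k ≤ j + n₂). For a set J of feasible indices and naturals ℓ ≤ n₁, r ≤ n₂, define f_J (ℓ, r) := ∃ j ∈ J, ℓ ≥ j ∧ r ≥ k − j. Let J₁ and J₂ be disjoint nonempty sets of feasible indices, and let ℓ ≤ n₁, r ≤ n₂ satisfy ¬f_{J₁} (ℓ, r) and ¬f_{J₂} (ℓ, r). Then there exist a ≤ n₁ − ℓ and b ≤ n₂ − r such that ¬(f_{J₁} (ℓ + a, r + b) ↔ f_{J₂} (ℓ + a, r + b)). -/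
/-- The staircase specification of a set `J` of indices, as a function of the numbers
`ℓ` and `r` of nails removed in the two halves: some disjunct `j ∈ J` falls, i.e.
at least `j` are removed on the left and at least `k - j` on the right. -/
def fJ (k : ℕ) (J : Set ℕ) (ℓ r : ℕ) : Prop :=
  ∃ j ∈ J, j ≤ ℓ ∧ k - j ≤ r

theorem staircase_separation (n₁ n₂ k : ℕ) (hk : 1 ≤ k)
    (J₁ J₂ : Set ℕ)
    (hfeas₁ : ∀ j ∈ J₁, j ≤ k ∧ j ≤ n₁ ∧ k ≤ j + n₂)
    (hfeas₂ : ∀ j ∈ J₂, j ≤ k ∧ j ≤ n₁ ∧ k ≤ j + n₂)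
    (hdisj : Disjoint J₁ J₂)
    (hne₁ : J₁.Nonempty) (hne₂ : J₂.Nonempty)
    (ℓ r : ℕ) (hℓ : ℓ ≤ n₁) (hr : r ≤ n₂)
    (hhang₁ : ¬ fJ k J₁ ℓ r) (hhang₂ : ¬ fJ k J₂ ℓ r) :
    ∃ a ≤ n₁ - ℓ, ∃ b ≤ n₂ - r,
      ¬ (fJ k J₁ (ℓ + a) (r + b) ↔ fJ k J₂ (ℓ + a) (r + b)) := by
  classical
  set c : ℕ → ℕ := fun j => max ℓ j + max r (k - j) with hc
  have hneU : (J₁ ∪ J₂).Nonempty := hne₁.mono Set.subset_union_left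
  have hTne : (c '' (J₁ ∪ J₂)).Nonempty := hneU.image c
  obtain ⟨j₀, hj₀U, hj₀c⟩ := Nat.sInf_mem hTne
  have hmin : ∀ j ∈ J₁ ∪ J₂, c j₀ ≤ c j := by
    intro j hj
    rw [hj₀c]
    exact Nat.sInf_le ⟨j, hj, rfl⟩
  have hfeasU : ∀ j ∈ J₁ ∪ J₂, j ≤ k ∧ j ≤ n₁ ∧ k ≤ j + n₂ := by
    intro j hj
    rcases hj with h | h
    · exact hfeas₁ j h
    · exact hfeas₂ j h
  have hhangU : ∀ j ∈ J₁ ∪ J₂, ℓ < j ∨ r < k - j := by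
    intro j hj
    rcases hj with h | h
    · by_contra hcon
      push_neg at hcon
      exact hhang₁ ⟨j, h, hcon.1, hcon.2⟩
    · by_contra hcon
      push_neg at hcon
      exact hhang₂ ⟨j, h, hcon.1, hcon.2⟩
  -- key uniqueness lemma
  have key : ∀ j ∈ J₁ ∪ J₂, j ≤ max ℓ j₀ → k - j ≤ max r (k - j₀) → j = j₀ := by
    intro j hj h1 h2
    have hle1 : max ℓ j ≤ max ℓ j₀ := max_le (le_max_left _ _) h1
    have hle2 : max r (k - j) ≤ max r (k - j₀) := max_le (le_max_left _ _) h2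
    have hcle : c j ≤ c j₀ := Nat.add_le_add hle1 hle2
    have hceq : c j = c j₀ := le_antisymm hcle (hmin j hj)
    have heq1 : max ℓ j = max ℓ j₀ := by
      simp only [hc] at hceq; omega
    have heq2 : max r (k - j) = max r (k - j₀) := by
      simp only [hc] at hceq; omega
    have hjk := (hfeasU j hj).1
    have hj₀k := (hfeasU j₀ hj₀U).1
    rcases hhangU j hj with hlt | hlt
    · have : max ℓ j = j := max_eq_right hlt.le
      have h0 : j₀ ≤ max ℓ j₀ := le_max_right _ _
      omega
    · have : max r (k - j) = k - j := max_eq_right hlt.le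
      have h0 : k - j₀ ≤ max r (k - j₀) := le_max_right _ _
      omega
  have hj₀feas := hfeasU j₀ hj₀U
  refine ⟨max ℓ j₀ - ℓ, by omega, max r (k - j₀) - r, by omega, ?_⟩
  have hL : ℓ + (max ℓ j₀ - ℓ) = max ℓ j₀ := by
    have := le_max_left ℓ j₀; omega
  have hR : r + (max r (k - j₀) - r) = max r (k - j₀) := by
    have := le_max_left r (k - j₀); omega
  rw [hL, hR]
  rcases hj₀U with h₀ | h₀
  · have hj₀not : j₀ ∉ J₂ := fun hmem => hdisj.ne_of_mem h₀ hmem rfl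
    intro hiff
    obtain ⟨j, hjJ₂, hj1, hj2⟩ :=
      hiff.mp ⟨j₀, h₀, le_max_right _ _, le_max_right _ _⟩
    exact hj₀not (key j (Or.inr hjJ₂) hj1 hj2 ▸ hjJ₂)
  · have hj₀not : j₀ ∉ J₁ := fun hmem => hdisj.ne_of_mem hmem h₀ rfl
    intro hiff
    obtain ⟨j, hjJ₁, hj1, hj2⟩ :=
      hiff.mpr ⟨j₀, h₀, le_max_right _ _, le_max_right _ _⟩
    exact hj₀not (key j (Or.inl hjJ₁) hj1 hj2 ▸ hjJ₁)
end

section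
/- For every i ≥ 2 and n = 2^i, there exists a solution w to the 2-out-of-n picture-hanging puzzle whose length satisfies 3 · |w| ≤ 8 · 6^i − 12 · 4^i (that is, |w| ≤ (8/3) · n^{log₂ 6} − 4 · n²). -/
/-!
A 1-out-of-`n` solution `g` (any removal kills it) doubles to `⁅g, g'⁆`, with `g'` a copy on
fresh nails. A 2-out-of-`n` solution `h` doubles to `⁅h g, g'⁆ ⁅g, h' g'⁆`: removing two nails
on one side kills `h g` and `g` there, removing one nail on each side kills `g` and `g'`, while
removing at most one nail leaves both entries of some commutator nontrivial. Products of
commutators of nontrivial words on the two disjoint sets of nails are reduced as written, hence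
nontrivial.

Lengths satisfy `|g| ≤ 4^i` and `|h_{i+1}| ≤ 4 |h_i| + 8 |g_i|`; starting from a 20-letter
solution on four nails this gives `3 |h_i| ≤ 8 · 6^i - 12 · 4^i`.
-/

open scoped commutatorElement

namespace FreeGroup

variable {α β : Type*}

def crossCommutator (u : FreeGroup α) (v : FreeGroup β) : FreeGroup (α ⊕ β) :=
  ⁅(map Sum.inl u : FreeGroup (α ⊕ β)), map Sum.inr v⁆

@[simp] theorem crossCommutator_one_left (v : FreeGroup β) :
    crossCommutator (1 : FreeGroup α) v = 1 := by
  simp [crossCommutator]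

@[simp] theorem crossCommutator_one_right (u : FreeGroup α) :
    crossCommutator u (1 : FreeGroup β) = 1 := by
  simp [crossCommutator]

variable [DecidableEq α] [DecidableEq β]

theorem toWord_map_of_injective {f : α → β} (hf : f.Injective) (x : FreeGroup α) :
    (map f x).toWord = x.toWord.map fun a => (f a.1, a.2) := by
  conv_lhs => rw [← mk_toWord (x := x)]
  rw [map.mk, toWord_mk]
  exact IsReduced.reduce_eq <|
    List.isChain_map_of_isChain _ (fun a b hab hf' => hab (hf hf')) isReduced_toWord

theorem norm_map_of_injective {f : α → β} (hf : f.Injective) (x : FreeGroup α) :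
    (map f x).norm = x.norm := by
  rw [norm, toWord_map_of_injective hf, List.length_map, norm]

theorem norm_commutatorElement_le (x y : FreeGroup α) :
    norm ⁅x, y⁆ ≤ 2 * x.norm + 2 * y.norm := by
  have := norm_mul_le (x * y * x⁻¹) y⁻¹
  have := norm_mul_le (x * y) x⁻¹
  have := norm_mul_le x y
  rw [commutatorElement_def]
  simp only [norm_inv_eq] at *
  omega

theorem toWord_mul_of_fst_ne {x y : FreeGroup α}
    (h : ∀ a ∈ x.toWord.getLast?, ∀ b ∈ y.toWord.head?, a.1 ≠ b.1) :
    (x * y).toWord = x.toWord ++ y.toWord := by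
  rw [toWord_mul]
  exact IsReduced.reduce_eq <| List.isChain_append.mpr
    ⟨isReduced_toWord, isReduced_toWord, fun a ha b hb hab => absurd hab (h a ha b hb)⟩

def LastLetterIn (p : α → Prop) (x : FreeGroup α) : Prop :=
  ∀ a ∈ x.toWord.getLast?, p a.1

theorem lastLetterIn_one (p : α → Prop) : LastLetterIn p (1 : FreeGroup α) := by
  simp [LastLetterIn]

theorem LastLetterIn.mul {p q : α → Prop} (hpq : ∀ a, p a → ¬ q a) {x y : FreeGroup α}
    (hx : LastLetterIn p x) (hy : y ≠ 1) (hyq : ∀ b ∈ y.toWord, q b.1) :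
    x * y ≠ 1 ∧ LastLetterIn q (x * y) := by
  have hy' : y.toWord ≠ [] := mt toWord_eq_nil_iff.mp hy
  have hxy : (x * y).toWord = x.toWord ++ y.toWord := toWord_mul_of_fst_ne
    fun a ha b hb hab => hpq _ (hx a ha) (hab ▸ hyq b (List.mem_of_mem_head? hb))
  refine ⟨fun h => hy' ?_, fun a ha => hyq a ?_⟩
  · rw [h, toWord_one] at hxy
    exact (List.append_eq_nil_iff.mp hxy.symm).2
  · rw [hxy, List.getLast?_append_of_ne_nil _ hy'] at ha
    exact List.mem_of_mem_getLast? ha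

theorem isLeft_of_mem_toWord_map_inl {z : FreeGroup α} :
    ∀ c ∈ (map (Sum.inl : α → α ⊕ β) z).toWord, c.1.isLeft := by
  simp [toWord_map_of_injective Sum.inl_injective]

theorem isRight_of_mem_toWord_map_inr {z : FreeGroup β} :
    ∀ c ∈ (map (Sum.inr : β → α ⊕ β) z).toWord, c.1.isRight := by
  simp [toWord_map_of_injective Sum.inr_injective]

theorem norm_crossCommutator_le (u : FreeGroup α) (v : FreeGroup β) :
    (crossCommutator u v).norm ≤ 2 * u.norm + 2 * v.norm := by
  have := norm_commutatorElement_le (map Sum.inl u : FreeGroup (α ⊕ β)) (map Sum.inr v)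
  rwa [norm_map_of_injective Sum.inl_injective, norm_map_of_injective Sum.inr_injective] at this

theorem LastLetterIn.mul_crossCommutator {x : FreeGroup (α ⊕ β)}
    (hx : LastLetterIn (·.isRight) x) {u : FreeGroup α} {v : FreeGroup β} (hu : u ≠ 1)
    (hv : v ≠ 1) :
    x * crossCommutator u v ≠ 1 ∧ LastLetterIn (·.isRight) (x * crossCommutator u v) := by
  have append_left {y : FreeGroup (α ⊕ β)} {w : FreeGroup α} (hw : w ≠ 1)
      (hy : LastLetterIn (·.isRight) y) :
      y * map Sum.inl w ≠ 1 ∧ LastLetterIn (·.isLeft) (y * map Sum.inl w) :=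
    hy.mul (by rintro (_ | _) <;> simp)
      ((map_ne_one_iff _ (map_injective Sum.inl_injective)).mpr hw)
      isLeft_of_mem_toWord_map_inl
  have append_right {y : FreeGroup (α ⊕ β)} {w : FreeGroup β} (hw : w ≠ 1)
      (hy : LastLetterIn (·.isLeft) y) :
      y * map Sum.inr w ≠ 1 ∧ LastLetterIn (·.isRight) (y * map Sum.inr w) :=
    hy.mul (by rintro (_ | _) <;> simp)
      ((map_ne_one_iff _ (map_injective Sum.inr_injective)).mpr hw)
      isRight_of_mem_toWord_map_inr
  rw [show x * crossCommutator u v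
      = x * map Sum.inl u * map Sum.inr v * map Sum.inl u⁻¹ * map Sum.inr v⁻¹ by
    simp only [crossCommutator, commutatorElement_def, _root_.map_inv, mul_assoc]]
  exact append_right (inv_ne_one.mpr hv) (append_left (inv_ne_one.mpr hu)
    (append_right hv (append_left hu hx).2).2).2

theorem crossCommutator_ne_one {u : FreeGroup α} {v : FreeGroup β} (hu : u ≠ 1) (hv : v ≠ 1) :
    crossCommutator u v ≠ 1 := by
  simpa using ((lastLetterIn_one _).mul_crossCommutator hu hv).1

theorem crossCommutator_mul_crossCommutator_ne_one {u u' : FreeGroup α} {v v' : FreeGroup β}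
    (hu : u ≠ 1) (hv' : v' ≠ 1) (h : v ≠ 1 ∨ u' ≠ 1) :
    crossCommutator u v * crossCommutator u' v' ≠ 1 := by
  by_cases hv : v = 1
  · simpa [hv] using crossCommutator_ne_one (h.resolve_left (not_not.mpr hv)) hv'
  by_cases hu' : u' = 1
  · simpa [hu'] using crossCommutator_ne_one hu hv
  simpa using (((lastLetterIn_one _).mul_crossCommutator hu hv).2.mul_crossCommutator hu' hv').1

end FreeGroup

open FreeGroup

section Puzzle

variable {α β : Type*} [DecidableEq α] [DecidableEq β]

def killGens (S : Finset α) : FreeGroup α →* FreeGroup α :=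
  FreeGroup.lift fun i => if i ∈ S then 1 else FreeGroup.of i

@[simp] theorem killGens_empty_apply (x : FreeGroup α) : killGens ∅ x = x := by
  have : killGens (∅ : Finset α) = MonoidHom.id _ := ext_hom _ _ fun a => by simp [killGens]
  rw [this, MonoidHom.id_apply]

theorem killGens_map {f : α → β} {S : Finset β} {T : Finset α} (hST : ∀ a, a ∈ T ↔ f a ∈ S)
    (x : FreeGroup α) : killGens S (map f x) = map f (killGens T x) := by
  have : (killGens S).comp (map f) = (map f).comp (killGens T) :=
    ext_hom _ _ fun a => by simp [killGens, hST, apply_ite]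
  exact DFunLike.congr_fun this x

theorem killGens_crossCommutator (S : Finset (α ⊕ β)) (u : FreeGroup α) (v : FreeGroup β) :
    killGens S (crossCommutator u v)
      = crossCommutator (killGens S.toLeft u) (killGens S.toRight v) := by
  simp only [crossCommutator, map_commutatorElement,
    killGens_map fun _ => Finset.mem_toLeft, killGens_map fun _ => Finset.mem_toRight]

def IsPuzzleSolution (k : ℕ) (w : FreeGroup α) : Prop :=
  ∀ S : Finset α, (k ≤ S.card → killGens S w = 1) ∧ (S.card < k → killGens S w ≠ 1)

theorem isSolution_iff_isPuzzleSolution {n k : ℕ} {w : FreeGroup (Fin n)} :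
    IsSolution k w ↔ IsPuzzleSolution k w :=
  Iff.rfl

theorem killGens_mk (S : Finset α) (L : List (α × Bool)) :
    killGens S (mk L) = mk (L.filter fun a => a.1 ∉ S) := by
  induction L with
  | nil => rfl
  | cons a L ih =>
    rw [← List.singleton_append, ← mul_mk, _root_.map_mul, ih, List.filter_append, ← mul_mk]
    congr 1
    obtain ⟨a, _ | _⟩ := a <;> by_cases ha : a ∈ S <;> simp [killGens, ha] <;> rfl

variable {k : ℕ} {w g h : FreeGroup α} {g' h' : FreeGroup β}

theorem IsPuzzleSolution.map_equiv (e : α ≃ β) (hw : IsPuzzleSolution k w) :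
    IsPuzzleSolution k (map e w) := by
  intro S
  have hS : ∀ a, a ∈ S.map e.symm.toEmbedding ↔ e a ∈ S := by simp [Finset.mem_map_equiv]
  simpa [killGens_map hS, map_eq_one_iff _ (map_injective e.injective)] using
    hw (S.map e.symm.toEmbedding)

theorem IsPuzzleSolution.ne_one (hg : IsPuzzleSolution 1 g) : g ≠ 1 := by
  simpa using (hg ∅).2

theorem IsPuzzleSolution.killGens_eq_one (hg : IsPuzzleSolution 1 g) {S : Finset α}
    (hS : S.Nonempty) : killGens S g = 1 :=
  (hg S).1 (Finset.card_pos.mpr hS)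

theorem isPuzzleSolution_one_of [Subsingleton α] (a : α) : IsPuzzleSolution 1 (of a) := by
  intro S
  rcases S.eq_empty_or_nonempty with rfl | ⟨b, hb⟩
  · simp [of_ne_one]
  · simp [killGens, Subsingleton.elim a b ▸ hb, Finset.ne_empty_of_mem hb]

theorem IsPuzzleSolution.killGens_mul_eq_one (hh : IsPuzzleSolution 2 h)
    (hg : IsPuzzleSolution 1 g) {S : Finset α} (hS : 2 ≤ S.card) : killGens S (h * g) = 1 := by
  rw [_root_.map_mul, (hh S).1 hS, hg.killGens_eq_one (Finset.card_pos.mp (by omega)), mul_one]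

theorem IsPuzzleSolution.killGens_mul_ne_one (hh : IsPuzzleSolution 2 h)
    (hg : IsPuzzleSolution 1 g) {S : Finset α} (hS : S.card ≤ 1) : killGens S (h * g) ≠ 1 := by
  have of_card_eq_one {T : Finset α} (hT : T.card = 1) : killGens T (h * g) ≠ 1 := by
    rw [_root_.map_mul, hg.killGens_eq_one (Finset.card_pos.mp (by omega)), mul_one]
    exact (hh T).2 (by omega)
  rcases Nat.le_one_iff_eq_zero_or_eq_one.mp hS with hS | hS
  · obtain ⟨a, -⟩ := List.exists_mem_of_ne_nil _ (mt toWord_eq_nil_iff.mp hg.ne_one)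
    rw [Finset.card_eq_zero.mp hS, killGens_empty_apply]
    intro hhg
    simpa [hhg] using of_card_eq_one (Finset.card_singleton a.1)
  · exact of_card_eq_one hS

theorem IsPuzzleSolution.crossCommutator (hg : IsPuzzleSolution 1 g)
    (hg' : IsPuzzleSolution 1 g') : IsPuzzleSolution 1 (crossCommutator g g') := by
  intro S
  rw [killGens_crossCommutator]
  refine ⟨fun hS => ?_, fun hS => ?_⟩
  · obtain ⟨a | b, hs⟩ := Finset.card_pos.mp hS
    · rw [hg.killGens_eq_one ⟨a, Finset.mem_toLeft.mpr hs⟩, crossCommutator_one_left]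
    · rw [hg'.killGens_eq_one ⟨b, Finset.mem_toRight.mpr hs⟩, crossCommutator_one_right]
  · have hcard := Finset.card_toLeft_add_card_toRight (u := S)
    rw [Finset.card_eq_zero.mp (by omega : S.toLeft.card = 0),
      Finset.card_eq_zero.mp (by omega : S.toRight.card = 0)]
    simpa using crossCommutator_ne_one hg.ne_one hg'.ne_one

theorem IsPuzzleSolution.crossCommutator_mul_crossCommutator (hh : IsPuzzleSolution 2 h)
    (hg : IsPuzzleSolution 1 g) (hh' : IsPuzzleSolution 2 h') (hg' : IsPuzzleSolution 1 g') :
    IsPuzzleSolution 2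
      (FreeGroup.crossCommutator (h * g) g' * FreeGroup.crossCommutator g (h' * g')) := by
  intro S
  have hcard := Finset.card_toLeft_add_card_toRight (u := S)
  rw [_root_.map_mul, killGens_crossCommutator, killGens_crossCommutator]
  refine ⟨fun hS => ?_, fun hS => ?_⟩
  · rcases S.toLeft.eq_empty_or_nonempty with hL | hL
    · rw [Finset.card_eq_zero.mpr hL] at hcard
      rw [hg'.killGens_eq_one (Finset.card_pos.mp (by omega)),
        hh'.killGens_mul_eq_one hg' (by omega)]
      simp
    rcases S.toRight.eq_empty_or_nonempty with hR | hR
    · rw [Finset.card_eq_zero.mpr hR] at hcard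
      rw [hh.killGens_mul_eq_one hg (by omega), hg.killGens_eq_one hL]
      simp
    · simp [hg.killGens_eq_one hL, hg'.killGens_eq_one hR]
  · refine crossCommutator_mul_crossCommutator_ne_one (hh.killGens_mul_ne_one hg (by omega))
      (hh'.killGens_mul_ne_one hg' (by omega)) ?_
    rcases S.toLeft.eq_empty_or_nonempty with hL | hL
    · exact .inr (by simpa [hL] using hg.ne_one)
    · have hR : S.toRight = ∅ := Finset.card_eq_zero.mp (by have := hL.card_pos; omega)
      exact .inl (by simpa [hR] using hg'.ne_one)

-- Doubling the two-nail solution `x₀ x₁` would give 40 letters, too many for the bound at `i = 2`.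
def baseTwo : FreeGroup (Fin 4) :=
  let x : Fin 4 → FreeGroup (Fin 4) := of
  let u := x 0 * x 1
  u * ⁅⁅x 0, x 1⁆, x 2 * x 3⁆ * u⁻¹ * ⁅u, ⁅x 2, x 3⁆⁆

theorem baseTwo_eq_mk : baseTwo = mk [(0, true), (1, true), (0, true), (1, true), (0, false),
    (1, false), (2, true), (3, true), (1, true), (0, true), (1, false), (0, false), (2, false),
    (3, false), (1, false), (0, false), (3, true), (2, true), (3, false), (2, false)] := by
  decide

theorem norm_baseTwo : baseTwo.norm = 20 := by
  rw [baseTwo_eq_mk]; decide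

theorem isPuzzleSolution_two_baseTwo : IsPuzzleSolution 2 baseTwo := by
  intro S
  rw [baseTwo_eq_mk, killGens_mk]
  revert S
  decide

end Puzzle

def finSumFinTwoPowEquiv (k : ℕ) : Fin (2 ^ k) ⊕ Fin (2 ^ k) ≃ Fin (2 ^ (k + 1)) :=
  finSumFinEquiv.trans (finCongr (by ring))

theorem exists_isPuzzleSolution_one_norm_le (i : ℕ) :
    ∃ g : FreeGroup (Fin (2 ^ i)), IsPuzzleSolution 1 g ∧ g.norm ≤ 4 ^ i := by
  induction i with
  | zero =>
    rw [pow_zero]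
    exact ⟨of 0, isPuzzleSolution_one_of 0, by simp⟩
  | succ k ih =>
    obtain ⟨g, hg, hg_norm⟩ := ih
    refine ⟨map (finSumFinTwoPowEquiv k) (crossCommutator g g),
      (hg.crossCommutator hg).map_equiv _, ?_⟩
    rw [norm_map_of_injective (Equiv.injective _), pow_succ]
    have h_comm := norm_crossCommutator_le g g
    omega

theorem three_mul_four_pow_le_two_mul_six_pow {k : ℕ} (hk : 2 ≤ k) : 3 * 4 ^ k ≤ 2 * 6 ^ k := by
  obtain ⟨m, rfl⟩ := Nat.exists_eq_add_of_le' hk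
  have := Nat.pow_le_pow_left (show 4 ≤ 6 by norm_num) m
  rw [pow_add, pow_add]
  norm_num
  omega

theorem two_out_of_n_short_solution (i : ℕ) (hi : 2 ≤ i) :
    ∃ w : FreeGroup (Fin (2 ^ i)), IsSolution 2 w ∧
      3 * FreeGroup.norm w ≤ 8 * 6 ^ i - 12 * 4 ^ i := by
  simp only [isSolution_iff_isPuzzleSolution]
  induction i, hi using Nat.le_induction with
  | base => exact ⟨baseTwo, isPuzzleSolution_two_baseTwo, by rw [norm_baseTwo]; norm_num⟩
  | succ k hk ih =>
    obtain ⟨h, hh, hh_norm⟩ := ih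
    obtain ⟨g, hg, hg_norm⟩ := exists_isPuzzleSolution_one_norm_le k
    refine ⟨map (finSumFinTwoPowEquiv k) (crossCommutator (h * g) g * crossCommutator g (h * g)),
      (hh.crossCommutator_mul_crossCommutator hg hh hg).map_equiv _, ?_⟩
    rw [norm_map_of_injective (Equiv.injective _), pow_succ, pow_succ]
    have h_mul := norm_mul_le (crossCommutator (h * g) g) (crossCommutator g (h * g))
    have h_left := norm_crossCommutator_le (h * g) g
    have h_right := norm_crossCommutator_le g (h * g)
    have h_hg := norm_mul_le h g
    have h_pow := three_mul_four_pow_le_two_mul_six_pow hk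
    omega
end

section
/- For every i ≥ 2 and n = 2^i, there exists a solution w to the (n−2)-out-of-n picture-hanging puzzle whose length is exactly |w| = 6 · (i − 1) · 2^i (that is, 6 · n · (log₂ n − 1)). -/
open FreeGroup List
open scoped commutatorElement

lemma Finset.exists_lt_lt_of_two_lt_card {α : Type*} [LinearOrder α] {s : Finset α}
    (hs : 2 < s.card) : ∃ a ∈ s, ∃ b ∈ s, ∃ c ∈ s, a < b ∧ b < c := by
  obtain ⟨t, hts, ht⟩ := Finset.exists_subset_card_eq hs
  let e := t.orderEmbOfFin ht
  exact ⟨e 0, hts (t.orderEmbOfFin_mem ht 0), e 1, hts (t.orderEmbOfFin_mem ht 1),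
    e 2, hts (t.orderEmbOfFin_mem ht 2), e.strictMono (by decide), e.strictMono (by decide)⟩

namespace PictureHanging

def run (o m : ℕ) (b : Bool) : List (ℕ × Bool) := (range' o m).map (·, b)

def commWord {α : Type*} (L M : List (α × Bool)) : List (α × Bool) :=
  L ++ M ++ invRev L ++ invRev M

def block (o h : ℕ) : List (ℕ × Bool) :=
  commWord (run o h true ++ run o h false) (run (o + h) h true) ++
    commWord (run o h true) (run (o + h) h true ++ run (o + h) h false)

def word : ℕ → ℕ → List (ℕ × Bool)
  | 0, _ | 1, _ => []
  | s + 2, o => word (s + 1) o ++ word (s + 1) (o + 2 ^ (s + 1)) ++ block o (2 ^ (s + 1))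

lemma length_block (o h : ℕ) : (block o h).length = 12 * h := by
  simp [block, commWord, run]; ring

lemma length_word (s o : ℕ) : (word s o).length = 6 * (s - 1) * 2 ^ s := by
  induction s generalizing o with
  | zero => simp [word]
  | succ s ih =>
    cases s with
    | zero => simp [word]
    | succ s =>
      simp only [word, length_append, ih, length_block, Nat.add_sub_cancel]
      ring

lemma head?_invRev {α : Type*} (L : List (α × Bool)) :
    (invRev L).head? = L.getLast?.map fun x => (x.1, !x.2) := by
  simp [invRev, head?_reverse, getLast?_map]

lemma getLast?_invRev {α : Type*} (L : List (α × Bool)) :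
    (invRev L).getLast? = L.head?.map fun x => (x.1, !x.2) := by
  simp [invRev, getLast?_reverse, head?_map]

lemma isChain_invRev_iff {α : Type*} {L : List (α × Bool)} :
    (invRev L).IsChain (fun x y => x.1 ≠ y.1) ↔ L.IsChain (fun x y => x.1 ≠ y.1) := by
  simp [invRev, isChain_reverse, isChain_map, ne_comm]

lemma isChain_run (o m : ℕ) (b : Bool) : (run o m b).IsChain (fun x y => x.1 ≠ y.1) :=
  (isChain_map _).2 <| (isChain_range' o m 1).imp fun _ _ h => by omega

lemma head?_run {o m : ℕ} (hm : m ≠ 0) (b : Bool) : (run o m b).head? = some (o, b) := by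
  simp [run, head?_range', hm]

lemma getLast?_run {o m : ℕ} (hm : m ≠ 0) (b : Bool) :
    (run o m b).getLast? = some (o + m - 1, b) := by
  simp [run, getLast?_range', hm]

lemma head?_block {o h : ℕ} (hh : h ≠ 0) : (block o h).head? = some (o, true) := by
  simp [block, commWord, head?_append, head?_run hh]

lemma getLast?_block {o h : ℕ} (hh : h ≠ 0) : (block o h).getLast? = some (o + h, false) := by
  simp [block, commWord, getLast?_append, getLast?_invRev, head?_run hh]

lemma isChain_block {o h : ℕ} (hh : 2 ≤ h) : (block o h).IsChain (fun x y => x.1 ≠ y.1) := by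
  have hh0 : h ≠ 0 := by omega
  simp [block, commWord, isChain_append, head?_append, head?_invRev, getLast?_invRev,
    isChain_invRev_iff, isChain_run, head?_run hh0, getLast?_run hh0]
  omega

lemma fst_bounds_of_mem_block {o h : ℕ} : ∀ p ∈ block o h, o ≤ p.1 ∧ p.1 < o + h + h := by
  simp [block, commWord, run, invRev]
  grind

lemma fst_bounds_of_mem_word (s o : ℕ) : ∀ p ∈ word s o, o ≤ p.1 ∧ p.1 < o + 2 ^ s := by
  induction s generalizing o with
  | zero => simp [word]
  | succ s ih =>
    cases s with
    | zero => simp [word]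
    | succ s =>
      have hpow : 2 ^ (s + 2) = 2 ^ (s + 1) + 2 ^ (s + 1) := by ring
      intro p hp
      simp only [word, mem_append] at hp
      rcases hp with (hp | hp) | hp
      · have := ih o p hp; omega
      · have := ih (o + 2 ^ (s + 1)) p hp; omega
      · have := fst_bounds_of_mem_block p hp; omega

lemma lt_fst_of_mem_getLast?_word (s o : ℕ) : ∀ p ∈ (word s o).getLast?, o < p.1 := by
  match s with
  | 0 | 1 => simp [word]
  | s + 2 =>
    rw [word, getLast?_append, getLast?_block (by positivity)]
    simp

lemma isChain_word (s o : ℕ) : (word s o).IsChain (fun x y => x.1 ≠ y.1) := by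
  induction s generalizing o with
  | zero => simp [word]
  | succ s ih =>
    cases s with
    | zero => simp [word]
    | succ s =>
      have hh : 2 ≤ 2 ^ (s + 1) := le_self_pow₀ one_le_two (by omega)
      simp only [word, isChain_append]
      refine ⟨⟨ih o, ih _, fun p hp q hq => ?_⟩, isChain_block hh, fun p hp q hq => ?_⟩
      · have := fst_bounds_of_mem_word _ _ p (mem_of_mem_getLast? hp)
        have := fst_bounds_of_mem_word _ _ q (mem_of_mem_head? hq)
        omega
      · rw [head?_block (by omega), Option.mem_some_iff] at hq
        rw [getLast?_append] at hp
        subst hq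
        cases hlast : (word (s + 1) (o + 2 ^ (s + 1))).getLast? with
        | none =>
          rw [hlast, Option.none_or] at hp
          exact (lt_fst_of_mem_getLast?_word _ _ p hp).ne'
        | some x =>
          rw [hlast, Option.some_or, Option.mem_some_iff] at hp
          have := fst_bounds_of_mem_word _ _ p (mem_of_mem_getLast? (hp ▸ hlast))
          simp; omega

lemma mk_commWord {α : Type*} (L M : List (α × Bool)) :
    mk (commWord L M) = ⁅mk L, mk M⁆ := by
  simp [commWord, commutatorElement_def, mul_mk, inv_mk]

section Evaluation

variable {G : Type*} [Group G]

def intervalProd (v : ℕ → G) (o m : ℕ) : G := ((range' o m).map v).prod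

lemma lift_mk_run_true (v : ℕ → G) (o m : ℕ) : lift v (mk (run o m true)) = intervalProd v o m := by
  simp [run, intervalProd, Function.comp_def]

lemma lift_mk_run_false (v : ℕ → G) (o m : ℕ) :
    lift v (mk (run o m false)) = intervalProd v⁻¹ o m := by
  simp [run, intervalProd, Function.comp_def, Pi.inv_def]

lemma intervalProd_eq_ite {v : ℕ → G} {o m j : ℕ}
    (hv : ∀ t, o ≤ t → t < o + m → t ≠ j → v t = 1) :
    intervalProd v o m = if o ≤ j ∧ j < o + m then v j else 1 := by
  induction m with
  | zero => simp [intervalProd]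
  | succ m ih =>
    rw [intervalProd, range'_concat, map_append, prod_append, ← intervalProd,
      ih fun t h₁ h₂ h₃ => hv t h₁ (by omega) h₃]
    by_cases hj : j = o + m
    · simp [hj]
    · simp [hv (o + m) (by omega) (by omega) (Ne.symm hj)]
      exact if_congr (by omega) rfl rfl

lemma intervalProd_eq_one {v : ℕ → G} {o m : ℕ} (hv : ∀ t, o ≤ t → t < o + m → v t = 1) :
    intervalProd v o m = 1 :=
  List.prod_eq_one fun _ hx => by
    obtain ⟨t, ht, rfl⟩ := List.mem_map.1 hx
    exact hv t (mem_range'_1.1 ht).1 (mem_range'_1.1 ht).2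

lemma intervalProd_mul_inv_eq_one {v : ℕ → G} {o m : ℕ} (j : ℕ)
    (hv : ∀ t, o ≤ t → t < o + m → t ≠ j → v t = 1) :
    intervalProd v o m * intervalProd v⁻¹ o m = 1 := by
  rw [intervalProd_eq_ite hv, intervalProd_eq_ite (v := v⁻¹) (j := j) fun t h₁ h₂ h₃ => by
    simp [hv t h₁ h₂ h₃]]
  split_ifs <;> simp

lemma intervalProd_eq_mul {v : ℕ → G} {o m j k : ℕ} (hj : o ≤ j) (hjk : j < k) (hk : k < o + m)
    (hv : ∀ t, o ≤ t → t < o + m → t ≠ j → t ≠ k → v t = 1) :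
    intervalProd v o m = v j * v k := by
  have hsplit := range'_append (s := o) (m := k - o) (n := o + m - k) (step := 1)
  rw [one_mul, Nat.add_sub_cancel' (by omega), show k - o + (o + m - k) = m by omega] at hsplit
  rw [intervalProd, ← hsplit, map_append, prod_append, ← intervalProd, ← intervalProd,
    intervalProd_eq_ite (j := j) fun t h₁ h₂ h₃ => hv t h₁ (by omega) h₃ (by omega),
    intervalProd_eq_ite (o := k) (m := o + m - k) (j := k)
      fun t h₁ h₂ h₃ => hv t (by omega) (by omega) (by omega) h₃,
    if_pos (by omega), if_pos (by omega)]

lemma intervalProd_mul_inv_eq_commutator {v : ℕ → G} {o m j k : ℕ} (hj : o ≤ j) (hjk : j < k)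
    (hk : k < o + m) (hv : ∀ t, o ≤ t → t < o + m → t ≠ j → t ≠ k → v t = 1) :
    intervalProd v o m * intervalProd v⁻¹ o m = ⁅v j, v k⁆ := by
  rw [intervalProd_eq_mul hj hjk hk hv, intervalProd_eq_mul (v := v⁻¹) hj hjk hk
    fun t h₁ h₂ h₃ h₄ => by simp [hv t h₁ h₂ h₃ h₄], commutatorElement_def]
  simp [mul_assoc]

lemma lift_mk_block (v : ℕ → G) (o h : ℕ) :
    lift v (mk (block o h)) =
      ⁅intervalProd v o h * intervalProd v⁻¹ o h, intervalProd v (o + h) h⁆ *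
        ⁅intervalProd v o h, intervalProd v (o + h) h * intervalProd v⁻¹ (o + h) h⁆ := by
  simp only [block, ← mul_mk, mk_commWord]
  simp only [_root_.map_mul, map_commutatorElement, lift_mk_run_true, lift_mk_run_false]

lemma lift_mk_block_eq_one_of_left {v : ℕ → G} {o h : ℕ}
    (hv : ∀ t, o ≤ t → t < o + h → v t = 1) : lift v (mk (block o h)) = 1 := by
  rw [lift_mk_block, intervalProd_eq_one hv,
    intervalProd_eq_one (v := v⁻¹) fun t h₁ h₂ => by simp [hv t h₁ h₂]]
  simp

lemma lift_mk_block_eq_one_of_right {v : ℕ → G} {o h : ℕ}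
    (hv : ∀ t, o + h ≤ t → t < o + h + h → v t = 1) : lift v (mk (block o h)) = 1 := by
  rw [lift_mk_block, intervalProd_eq_one (o := o + h) hv,
    intervalProd_eq_one (v := v⁻¹) (o := o + h) fun t h₁ h₂ => by simp [hv t h₁ h₂]]
  simp

lemma lift_mk_block_eq_one {v : ℕ → G} {o h a b : ℕ}
    (hv : ∀ t, o ≤ t → t < o + h + h → t ≠ a → t ≠ b → v t = 1) :
    lift v (mk (block o h)) = 1 := by
  by_cases hL : ∀ t, o ≤ t → t < o + h → v t = 1
  · exact lift_mk_block_eq_one_of_left hL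
  by_cases hR : ∀ t, o + h ≤ t → t < o + h + h → v t = 1
  · exact lift_mk_block_eq_one_of_right hR
  push Not at hL hR
  -- the two survivors lie in different halves, so each half has exactly one
  obtain ⟨t₀, h₀, h₀', hv₀⟩ := hL
  obtain ⟨t₁, h₁, h₁', hv₁⟩ := hR
  have ht₀ : t₀ = a ∨ t₀ = b := by
    by_contra! h
    exact hv₀ (hv t₀ h₀ (by omega) h.1 h.2)
  have ht₁ : t₁ = a ∨ t₁ = b := by
    by_contra! h
    exact hv₁ (hv t₁ (by omega) h₁' h.1 h.2)
  rw [lift_mk_block,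
    intervalProd_mul_inv_eq_one t₀ fun t h₂ h₃ h₄ => hv t h₂ (by omega) (by omega) (by omega),
    intervalProd_mul_inv_eq_one t₁ fun t h₂ h₃ h₄ => hv t (by omega) h₃ (by omega) (by omega)]
  simp

lemma lift_mk_block_of_two_left_one_right {v : ℕ → G} {o h j k l : ℕ} (hj : o ≤ j) (hjk : j < k)
    (hk : k < o + h) (hl : o + h ≤ l) (hl' : l < o + h + h)
    (hv : ∀ t, o ≤ t → t < o + h + h → t ≠ j → t ≠ k → t ≠ l → v t = 1) :
    lift v (mk (block o h)) = ⁅⁅v j, v k⁆, v l⁆ := by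
  rw [lift_mk_block,
    intervalProd_mul_inv_eq_commutator hj hjk hk
      fun t h₁ h₂ h₃ h₄ => hv t h₁ (by omega) h₃ h₄ (by omega),
    intervalProd_mul_inv_eq_one l fun t h₁ h₂ h₃ => hv t (by omega) h₂ (by omega) (by omega) h₃,
    intervalProd_eq_ite (o := o + h) (j := l)
      fun t h₁ h₂ h₃ => hv t (by omega) h₂ (by omega) (by omega) h₃, if_pos ⟨hl, hl'⟩]
  simp

lemma lift_mk_block_of_one_left_two_right {v : ℕ → G} {o h j k l : ℕ} (hj : o ≤ j)
    (hj' : j < o + h) (hk : o + h ≤ k) (hkl : k < l) (hl : l < o + h + h)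
    (hv : ∀ t, o ≤ t → t < o + h + h → t ≠ j → t ≠ k → t ≠ l → v t = 1) :
    lift v (mk (block o h)) = ⁅v j, ⁅v k, v l⁆⁆ := by
  rw [lift_mk_block,
    intervalProd_mul_inv_eq_one j fun t h₁ h₂ h₃ => hv t h₁ (by omega) h₃ (by omega) (by omega),
    intervalProd_eq_ite (o := o) (j := j)
      fun t h₁ h₂ h₃ => hv t h₁ (by omega) h₃ (by omega) (by omega), if_pos ⟨hj, hj'⟩,
    intervalProd_mul_inv_eq_commutator hk hkl hl
      fun t h₁ h₂ h₃ h₄ => hv t (by omega) h₂ (by omega) h₃ h₄]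
  simp

lemma lift_mk_word_succ_succ (v : ℕ → G) (s o : ℕ) :
    lift v (mk (word (s + 2) o)) = lift v (mk (word (s + 1) o)) *
      lift v (mk (word (s + 1) (o + 2 ^ (s + 1)))) * lift v (mk (block o (2 ^ (s + 1)))) := by
  rw [word, ← mul_mk, ← mul_mk, _root_.map_mul, _root_.map_mul]

lemma lift_mk_word_eq_one {v : ℕ → G} {s o : ℕ} (a b : ℕ)
    (hv : ∀ t, o ≤ t → t < o + 2 ^ s → t ≠ a → t ≠ b → v t = 1) :
    lift v (mk (word s o)) = 1 := by
  induction s generalizing o with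
  | zero => simp [word]
  | succ s ih =>
    cases s with
    | zero => simp [word]
    | succ s =>
      have hpow : 2 ^ (s + 2) = 2 ^ (s + 1) + 2 ^ (s + 1) := by ring
      rw [lift_mk_word_succ_succ, ih fun t h₁ h₂ => hv t h₁ (by omega),
        ih fun t h₁ h₂ => hv t (by omega) (by omega),
        lift_mk_block_eq_one fun t h₁ h₂ => hv t h₁ (by omega)]
      simp

lemma lift_mk_word_eq_commutator {v : ℕ → G} {s o j k l : ℕ} (hj : o ≤ j) (hjk : j < k)
    (hkl : k < l) (hl : l < o + 2 ^ s)
    (hv : ∀ t, o ≤ t → t < o + 2 ^ s → t ≠ j → t ≠ k → t ≠ l → v t = 1) :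
    lift v (mk (word s o)) = ⁅⁅v j, v k⁆, v l⁆ ∨ lift v (mk (word s o)) = ⁅v j, ⁅v k, v l⁆⁆ := by
  induction s generalizing o with
  | zero => simp at hl; omega
  | succ s ih =>
    cases s with
    | zero => simp at hl; omega
    | succ s =>
      have hpow : 2 ^ (s + 2) = 2 ^ (s + 1) + 2 ^ (s + 1) := by ring
      set h := 2 ^ (s + 1)
      rw [lift_mk_word_succ_succ]
      by_cases hlh : l < o + h
      · rw [lift_mk_word_eq_one (o := o + h) o o fun t h₁ h₂ _ _ =>
            hv t (by omega) (by omega) (by omega) (by omega) (by omega),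
          lift_mk_block_eq_one_of_right fun t h₁ h₂ =>
            hv t (by omega) (by omega) (by omega) (by omega) (by omega), mul_one, mul_one]
        exact ih hj hlh fun t h₁ h₂ => hv t h₁ (by omega)
      by_cases hjh : o + h ≤ j
      · rw [lift_mk_word_eq_one (o := o) o o fun t h₁ h₂ _ _ =>
            hv t (by omega) (by omega) (by omega) (by omega) (by omega),
          lift_mk_block_eq_one_of_left fun t h₁ h₂ =>
            hv t (by omega) (by omega) (by omega) (by omega) (by omega), one_mul, mul_one]
        exact ih hjh (by omega) fun t h₁ h₂ => hv t (by omega) (by omega)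
      by_cases hkh : k < o + h
      · left
        rw [lift_mk_word_eq_one (o := o) j k fun t h₁ h₂ h₃ h₄ =>
            hv t h₁ (by omega) h₃ h₄ (by omega),
          lift_mk_word_eq_one (o := o + h) l l fun t h₁ h₂ h₃ _ =>
            hv t (by omega) (by omega) (by omega) (by omega) h₃,
          lift_mk_block_of_two_left_one_right hj hjk hkh (by omega) (by omega)
            fun t h₁ h₂ => hv t h₁ (by omega)]
        simp
      · right
        rw [lift_mk_word_eq_one (o := o) j j fun t h₁ h₂ h₃ _ =>
            hv t h₁ (by omega) h₃ (by omega) (by omega),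
          lift_mk_word_eq_one (o := o + h) k l fun t h₁ h₂ h₃ h₄ =>
            hv t (by omega) (by omega) (by omega) h₃ h₄,
          lift_mk_block_of_one_left_two_right hj (by omega) (by omega) hkl (by omega)
            fun t h₁ h₂ => hv t h₁ (by omega)]
        simp

end Evaluation

lemma norm_mk_of_isReduced {α : Type*} [DecidableEq α] {L : List (α × Bool)} (hL : IsReduced L) :
    FreeGroup.norm (mk L) = L.length := by
  rw [FreeGroup.norm, toWord_mk, hL.reduce_eq]

lemma exists_retraction_fin_three {α : Type*} [DecidableEq α] {a b c : α} (hab : a ≠ b)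
    (hac : a ≠ c) (hbc : b ≠ c) : ∃ r : FreeGroup α →* FreeGroup (Fin 3),
      r (of a) = of 0 ∧ r (of b) = of 1 ∧ r (of c) = of 2 :=
  ⟨lift fun x => if x = a then of 0 else if x = b then of 1 else if x = c then of 2 else 1,
    by simp [hab.symm, hac.symm, hbc.symm]⟩

lemma commutatorElement_commutatorElement_of_ne_one {α : Type*} [DecidableEq α] {a b c : α}
    (hab : a ≠ b) (hac : a ≠ c) (hbc : b ≠ c) : ⁅⁅of a, of b⁆, of c⁆ ≠ (1 : FreeGroup α) := by
  obtain ⟨r, ha, hb, hc⟩ := exists_retraction_fin_three hab hac hbc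
  intro h
  have := congrArg r h
  rw [map_commutatorElement, map_commutatorElement, ha, hb, hc, _root_.map_one] at this
  exact absurd this (by decide)

lemma commutatorElement_of_commutatorElement_ne_one {α : Type*} [DecidableEq α] {a b c : α}
    (hab : a ≠ b) (hac : a ≠ c) (hbc : b ≠ c) : ⁅of a, ⁅of b, of c⁆⁆ ≠ (1 : FreeGroup α) := by
  obtain ⟨r, ha, hb, hc⟩ := exists_retraction_fin_three hab hac hbc
  intro h
  have := congrArg r h
  rw [map_commutatorElement, map_commutatorElement, ha, hb, hc, _root_.map_one] at this
  exact absurd this (by decide)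

lemma kill_of_mem {n : ℕ} {S : Finset (Fin n)} {i : Fin n} (hi : i ∈ S) : kill S (of i) = 1 := by
  rw [kill, lift_apply_of, if_pos hi]

lemma kill_of_notMem {n : ℕ} {S : Finset (Fin n)} {i : Fin n} (hi : i ∉ S) :
    kill S (of i) = of i := by
  rw [kill, lift_apply_of, if_neg hi]

lemma kill_kill_of_subset {n : ℕ} {S T : Finset (Fin n)} (hST : S ⊆ T) (x : FreeGroup (Fin n)) :
    kill T (kill S x) = kill T x := by
  rw [← MonoidHom.comp_apply]
  congr 1
  refine FreeGroup.ext_hom _ _ fun i => ?_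
  by_cases hi : i ∈ S
  · simp [kill_of_mem hi, kill_of_mem (hST hi)]
  · simp [kill_of_notMem hi]

def picture (s : ℕ) : FreeGroup (Fin (2 ^ s)) := map (Fin.ofNat (2 ^ s)) (mk (word s 0))

lemma norm_picture (s : ℕ) : FreeGroup.norm (picture s) = 6 * (s - 1) * 2 ^ s := by
  rw [picture, map.mk, norm_mk_of_isReduced, length_map, length_word]
  refine (isChain_map _).2 <| (isChain_word s 0).imp_of_mem_imp fun p q hp hq hpq hf => ?_
  have := congrArg Fin.val hf
  have hp' := (fst_bounds_of_mem_word s 0 p hp).2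
  have hq' := (fst_bounds_of_mem_word s 0 q hq).2
  rw [zero_add] at hp' hq'
  rw [Fin.val_ofNat, Fin.val_ofNat, Nat.mod_eq_of_lt hp', Nat.mod_eq_of_lt hq'] at this
  exact absurd this hpq

lemma kill_picture {s : ℕ} (S : Finset (Fin (2 ^ s))) :
    kill S (picture s) = lift (fun t => kill S (of (Fin.ofNat (2 ^ s) t))) (mk (word s 0)) := by
  rw [picture, ← MonoidHom.comp_apply]
  exact lift_unique _ fun t => by simp

lemma kill_picture_eq_one {s : ℕ} {S : Finset (Fin (2 ^ s))} {a b : Fin (2 ^ s)}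
    (hS : Sᶜ ⊆ {a, b}) : kill S (picture s) = 1 := by
  rw [kill_picture]
  refine lift_mk_word_eq_one a b fun t _ ht hta htb => kill_of_mem ?_
  by_contra hmem
  have := hS (Finset.mem_compl.2 hmem)
  rw [zero_add] at ht
  simp only [Finset.mem_insert, Finset.mem_singleton, Fin.ext_iff, Fin.val_ofNat,
    Nat.mod_eq_of_lt ht] at this
  omega

lemma kill_picture_ne_one {s : ℕ} {S : Finset (Fin (2 ^ s))} {j k l : Fin (2 ^ s)} (hjk : j < k)
    (hkl : k < l) (hj : j ∉ S) (hk : k ∉ S) (hl : l ∉ S) : kill S (picture s) ≠ 1 := by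
  intro hS
  set T : Finset (Fin (2 ^ s)) := {j, k, l}ᶜ
  have hST : S ⊆ T := fun x hx => by
    simp only [T, Finset.mem_compl, Finset.mem_insert, Finset.mem_singleton]
    rintro (rfl | rfl | rfl) <;> contradiction
  have hT : kill T (picture s) = 1 := by rw [← kill_kill_of_subset hST, hS, _root_.map_one]
  have hv : ∀ t : ℕ, 0 ≤ t → t < 0 + 2 ^ s → t ≠ j → t ≠ k → t ≠ l →
      kill T (of (Fin.ofNat (2 ^ s) t)) = 1 := fun t _ ht htj htk htl => by
    rw [zero_add] at ht
    refine kill_of_mem ?_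
    simp [T, Fin.ext_iff, Nat.mod_eq_of_lt ht, htj, htk, htl]
  have hsurvive : ∀ x : Fin (2 ^ s), x ∉ T → kill T (of (Fin.ofNat (2 ^ s) x)) = of x :=
    fun x hx => by rw [Fin.ofNat_val_eq_self, kill_of_notMem hx]
  have hne : j ≠ k ∧ j ≠ l ∧ k ≠ l := ⟨hjk.ne, (hjk.trans hkl).ne, hkl.ne⟩
  rw [kill_picture] at hT
  rcases lift_mk_word_eq_commutator (Nat.zero_le _) hjk hkl (by omega) hv with h | h <;>
    rw [h, hsurvive j (by simp [T]), hsurvive k (by simp [T]), hsurvive l (by simp [T])] at hT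
  · exact commutatorElement_commutatorElement_of_ne_one hne.1 hne.2.1 hne.2.2 hT
  · exact commutatorElement_of_commutatorElement_ne_one hne.1 hne.2.1 hne.2.2 hT

end PictureHanging

theorem n_minus_two_out_of_n_solution (i : ℕ) (hi : 2 ≤ i) :
    ∃ w : FreeGroup (Fin (2 ^ i)), IsSolution (2 ^ i - 2) w ∧
      FreeGroup.norm w = 6 * (i - 1) * 2 ^ i := by
  refine ⟨PictureHanging.picture i, fun S => ⟨fun hS => ?_, fun hS => ?_⟩,
    PictureHanging.norm_picture i⟩
  · have h2 : 2 ≤ 2 ^ i := le_self_pow₀ one_le_two (by omega)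
    obtain ⟨U, hSU, -, hU⟩ := Finset.exists_subsuperset_card_eq (n := 2) (Finset.subset_univ Sᶜ)
      (by rw [Finset.card_compl, Fintype.card_fin]; omega) (by simpa using h2)
    obtain ⟨a, b, -, rfl⟩ := Finset.card_eq_two.1 hU
    exact PictureHanging.kill_picture_eq_one hSU
  · obtain ⟨j, hj, k, hk, l, hl, hjk, hkl⟩ := Finset.exists_lt_lt_of_two_lt_card (s := Sᶜ)
      (by rw [Finset.card_compl, Fintype.card_fin]; omega)
    exact PictureHanging.kill_picture_ne_one hjk hkl
      (Finset.mem_compl.1 hj) (Finset.mem_compl.1 hk) (Finset.mem_compl.1 hl)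
end

section
/- One-step extension: let n ≥ 3 and 2 ≤ k ≤ n − 1. Let A, B ∈ FreeGroup (Fin n) be supported in the first n − 1 generators, such that kill_S A = 1 ↔ |S ∩ {0, …, n−2}| ≥ k and kill_S B = 1 ↔ |S ∩ {0, …, n−2}| ≥ k − 1 for every S ⊆ Fin n (that is, A solves the k-out-of-(n−1) puzzle and B solves the (k−1)-out-of-(n−1) puzzle on the first n − 1 nails). Then the word w = A · x_{n-1} · B · A⁻¹ · x_{n-1}⁻¹ is a solution to the k-out-of-n picture-hanging puzzle. -/
/-!
Let `t` be the last generator and write `a`, `b` for the images of `A`, `B` under `kill S`; they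
still avoid `t`. If `t ∈ S` the word becomes the conjugate `a b a⁻¹`, trivial iff `b = 1`.
Otherwise it is `a t b a⁻¹ t⁻¹`: killing `t` as well leaves `a b a⁻¹`, so triviality forces
`b = 1`, and then the commutator `[a, t]` is trivial only for `a = 1`, since a nontrivial reduced
word avoiding `t` does not commute with `t`. Comparing with `|S|`, which counts `t` once more than
`S ∩ {0, …, n - 2}` when `t ∈ S`, gives the thresholds `k - 1` and `k`.
-/

namespace FreeGroup

variable {α : Type*}

theorem isReduced_append_of_disjoint {L₁ L₂ : List (α × Bool)} (h₁ : IsReduced L₁)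
    (h₂ : IsReduced L₂) (h : ∀ p ∈ L₁, ∀ q ∈ L₂, p.1 ≠ q.1) : IsReduced (L₁ ++ L₂) :=
  List.isChain_append.2 ⟨h₁, h₂, fun p hp q hq hpq =>
    absurd hpq (h p (List.mem_of_getLast? hp) q (List.mem_of_mem_head? hq))⟩

variable [DecidableEq α]

theorem toWord_mul_of_disjoint {x y : FreeGroup α}
    (h : ∀ p ∈ x.toWord, ∀ q ∈ y.toWord, p.1 ≠ q.1) :
    (x * y).toWord = x.toWord ++ y.toWord := by
  rw [toWord_mul]
  exact (isReduced_append_of_disjoint isReduced_toWord isReduced_toWord h).reduce_eq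

theorem not_commute_of_forall_ne {a : FreeGroup α} {c : α} (ha : a ≠ 1)
    (hc : ∀ p ∈ a.toWord, p.1 ≠ c) : ¬Commute a (of c) := by
  intro hcomm
  have hword := congrArg toWord hcomm.eq
  rw [toWord_mul_of_disjoint (by simpa [toWord_of] using hc),
    toWord_mul_of_disjoint (by simpa [toWord_of, eq_comm] using hc), toWord_of] at hword
  -- `c :: w = w ++ [c]` with `w = a.toWord` nonempty puts the letter `c` into `w`
  obtain ⟨h, -⟩ | ⟨L, hL, -⟩ := List.cons_eq_append_iff.1 hword.symm
  · exact ha (toWord_eq_nil_iff.1 h)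
  · exact hc (c, true) (hL ▸ List.mem_cons_self) rfl

theorem fst_mem_of_mem_closure {T : Set α} {a : FreeGroup α}
    (ha : a ∈ Subgroup.closure (of '' T)) : ∀ p ∈ a.toWord, p.1 ∈ T := by
  induction ha using Subgroup.closure_induction with
  | mem x hx =>
    obtain ⟨j, hj, rfl⟩ := hx
    simpa [toWord_of] using hj
  | one => simp
  | mul x y _ _ ihx ihy =>
    intro p hp
    exact (List.mem_append.1 ((toWord_mul_sublist x y).mem hp)).elim (ihx p) (ihy p)
  | inv x _ ihx =>
    intro p hp
    rw [toWord_inv, invRev, List.mem_reverse, List.mem_map] at hp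
    obtain ⟨q, hq, rfl⟩ := hp
    exact ihx q hq

theorem not_commute_of_mem_closure {T : Set α} {a : FreeGroup α} {c : α}
    (ha : a ∈ Subgroup.closure (of '' T)) (ha₁ : a ≠ 1) (hc : c ∉ T) : ¬Commute a (of c) :=
  not_commute_of_forall_ne ha₁ fun p hp hpc => hc (hpc ▸ fst_mem_of_mem_closure ha p hp)

end FreeGroup

open FreeGroup (of)

section Kill

variable {n : ℕ} {S : Finset (Fin n)} {T : Set (Fin n)} {x : FreeGroup (Fin n)}

@[simp]
theorem kill_of (S : Finset (Fin n)) (i : Fin n) :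
    kill S (of i) = if i ∈ S then 1 else of i :=
  FreeGroup.lift_apply_of

theorem kill_eq_self_of_mem_closure (hx : x ∈ Subgroup.closure (of '' T))
    (hST : ∀ i ∈ S, i ∉ T) : kill S x = x := by
  refine MonoidHom.eqOn_closure (g := MonoidHom.id _) ?_ hx
  rintro _ ⟨i, hi, rfl⟩
  simp [show i ∉ S from fun h => hST i h hi]

theorem kill_mem_closure (S : Finset (Fin n)) (hx : x ∈ Subgroup.closure (of '' T)) :
    kill S x ∈ Subgroup.closure (of '' T) := by
  have hmap : kill S x ∈ (Subgroup.closure (of '' T)).map (kill S) := ⟨x, hx, rfl⟩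
  rw [MonoidHom.map_closure] at hmap
  refine Subgroup.closure_le _ |>.2 ?_ hmap
  rintro _ ⟨_, ⟨i, hi, rfl⟩, rfl⟩
  rw [kill_of]
  split_ifs
  · exact Subgroup.one_mem _
  · exact Subgroup.subset_closure ⟨i, hi, rfl⟩

theorem mul_of_mul_mul_inv_mul_inv_eq_one_iff {a b : FreeGroup (Fin n)} {c : Fin n}
    (ha : a ∈ Subgroup.closure (of '' T)) (hb : b ∈ Subgroup.closure (of '' T)) (hc : c ∉ T) :
    a * of c * b * a⁻¹ * (of c)⁻¹ = 1 ↔ a = 1 ∧ b = 1 := by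
  refine ⟨fun h => ?_, fun ⟨ha₁, hb₁⟩ => by simp [ha₁, hb₁]⟩
  have hfix : ∀ y ∈ Subgroup.closure (of '' T), kill {c} y = y := fun y hy =>
    kill_eq_self_of_mem_closure hy (by simpa using hc)
  have hb₁ : b = 1 := by
    have := congrArg (kill {c}) h
    simpa [hfix a ha, hfix b hb] using this
  subst hb₁
  refine ⟨by_contra fun ha₁ => FreeGroup.not_commute_of_mem_closure ha ha₁ hc ?_, rfl⟩
  rw [mul_one, mul_inv_eq_one, mul_inv_eq_iff_eq_mul] at h
  exact h

end Kill

theorem isSolution_iff {n k : ℕ} {w : FreeGroup (Fin n)} :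
    IsSolution k w ↔ ∀ S : Finset (Fin n), kill S w = 1 ↔ k ≤ S.card :=
  forall_congr' fun _ =>
    ⟨fun h => ⟨fun h₁ => not_lt.1 fun hlt => h.2 hlt h₁, h.1⟩,
      fun h => ⟨h.2, fun hlt h₁ => not_le.2 hlt (h.1 h₁)⟩⟩

theorem card_eq_card_filter_lt_add {n : ℕ} (S : Finset (Fin n)) (hn : 0 < n) :
    S.card = (S.filter fun j : Fin n => (j : ℕ) < n - 1).card +
      if (⟨n - 1, by omega⟩ : Fin n) ∈ S then 1 else 0 := by
  rw [← Finset.card_filter_add_card_filter_not (s := S) fun j : Fin n => (j : ℕ) < n - 1]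
  congr 1
  have hlast : (S.filter fun j : Fin n => ¬(j : ℕ) < n - 1) =
      S.filter fun j => j = ⟨n - 1, by omega⟩ := by
    refine Finset.filter_congr fun j _ => ?_
    simp only [Fin.ext_iff]
    omega
  rw [hlast, Finset.filter_eq']
  split_ifs <;> simp

theorem one_step_extension (n k : ℕ) (hn : 3 ≤ n) (hk₁ : 2 ≤ k)
    (A B : FreeGroup (Fin n))
    (hAsupp : A ∈ Subgroup.closure (FreeGroup.of '' {j : Fin n | (j : ℕ) < n - 1}))
    (hBsupp : B ∈ Subgroup.closure (FreeGroup.of '' {j : Fin n | (j : ℕ) < n - 1}))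
    (hA : ∀ S : Finset (Fin n),
      kill S A = 1 ↔ k ≤ (S.filter (fun j : Fin n => (j : ℕ) < n - 1)).card)
    (hB : ∀ S : Finset (Fin n),
      kill S B = 1 ↔ k - 1 ≤ (S.filter (fun j : Fin n => (j : ℕ) < n - 1)).card) :
    IsSolution k
      (A * FreeGroup.of (⟨n - 1, by omega⟩ : Fin n) * B * A⁻¹ *
        (FreeGroup.of (⟨n - 1, by omega⟩ : Fin n))⁻¹) := by
  refine isSolution_iff.2 fun S => ?_
  have hcard := card_eq_card_filter_lt_add S (by omega)
  by_cases ht : (⟨n - 1, by omega⟩ : Fin n) ∈ S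
  · simp only [map_mul, map_inv, kill_of, ht, if_true, mul_one, inv_one, conj_eq_one_iff,
      hB] at hcard ⊢
    omega
  · simp only [map_mul, map_inv, kill_of, ht, if_false, add_zero] at hcard ⊢
    rw [mul_of_mul_mul_inv_mul_inv_eq_one_iff (kill_mem_closure S hAsupp)
      (kill_mem_closure S hBsupp) (by simp), hA, hB]
    omega
end
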